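/- arXiv:2007.13934 — 8 statements merged into one kernel-verified Lean document; each statement's English description precedes it below -/
import Mathlib

section
/- Let $b$ and $s$ be independent real-valued random variables with continuous CDFs $F$ (for $b$) and $G$ (for $s$). Let $r = \Pr[b \geq s] > 0$, and define $x = \overline{F}^{-1}(r/2)$ (i.e., $\Pr[b \geq x] = r/2$) and $y = G^{-1}(r/2)$ (i.e., $\Pr[s \leq y] = r/2$). Then $x \geq y$. -/
/-!
Suppose `x < y`. If `s ≤ b` then `b ≥ x` or `s ≤ x`, so `r` is at most the probability of the union
of the independent events `A = {b ≥ x}` and `B = {s ≤ x}`, whose probabilities are `r / 2` and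
some `p ≤ Pr[s ≤ y] = r / 2`. Inclusion–exclusion gives `r ≤ r / 2 + p - (r / 2) p ≤ r - (r / 2) p`,
forcing `p = 0` and then `r ≤ r / 2`, which contradicts `r > 0`.
-/

open MeasureTheory

lemma measureReal_union_of_measure_inter_eq_mul {Ω : Type*} [MeasurableSpace Ω] {μ : Measure Ω}
    [IsFiniteMeasure μ] {A B : Set Ω} (hA : MeasurableSet A) (hAB : μ (A ∩ B) = μ A * μ B) :
    μ.real (A ∪ B) = μ.real A + μ.real B - μ.real A * μ.real B := by
  have hAB' : μ.real (A ∩ B) = μ.real A * μ.real B := by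
    simp only [Measure.real, hAB, ENNReal.toReal_mul]
  linarith [measureReal_union_add_inter' (μ := μ) (t := B) hA]

theorem stmt0_general
    {Ω : Type*} [MeasurableSpace Ω] (μ : Measure Ω) [IsProbabilityMeasure μ]
    (b s : Ω → ℝ) (hb : Measurable b)
    (hindep : ProbabilityTheory.IndepFun b s μ)
    (r x y : ℝ)
    (hr : r = (μ {ω | s ω ≤ b ω}).toReal)
    (hrpos : 0 < r)
    (hx : (μ {ω | x ≤ b ω}).toReal = r / 2)
    (hy : (μ {ω | s ω ≤ y}).toReal = r / 2) :
    y ≤ x := by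
  by_contra! hxy
  set A : Set Ω := b ⁻¹' Set.Ici x
  set B : Set Ω := s ⁻¹' Set.Iic x
  have hunion : μ.real (A ∪ B) = μ.real A + μ.real B - μ.real A * μ.real B :=
    measureReal_union_of_measure_inter_eq_mul (hb measurableSet_Ici)
      (hindep.measure_inter_preimage_eq_mul _ _ measurableSet_Ici measurableSet_Iic)
  have hr_le : r ≤ μ.real (A ∪ B) := by
    rw [hr]
    exact measureReal_mono fun ω (hω : s ω ≤ b ω) =>
      (le_or_gt x (b ω)).imp id fun h => hω.trans h.le
  have hB_le : μ.real B ≤ r / 2 := by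
    rw [← hy]
    exact measureReal_mono fun ω (hω : s ω ≤ x) => hω.trans hxy.le
  rw [show μ.real A = r / 2 from hx] at hunion
  nlinarith [mul_nonneg hrpos.le (measureReal_nonneg (μ := μ) (s := B)), mul_pos hrpos hrpos]

/-- If `b` and `s` are independent real random variables with continuous CDFs,
`r = Pr[b ≥ s] > 0`, `Pr[b ≥ x] = r/2` and `Pr[s ≤ y] = r/2`, then `x ≥ y`. -/
theorem stmt0
    {Ω : Type*} [MeasurableSpace Ω] (μ : Measure Ω) [IsProbabilityMeasure μ]
    (b s : Ω → ℝ) (hb : Measurable b) (hs : Measurable s)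
    (hindep : ProbabilityTheory.IndepFun b s μ)
    (hbcont : ∀ t : ℝ, μ {ω | b ω = t} = 0)
    (hscont : ∀ t : ℝ, μ {ω | s ω = t} = 0)
    (r x y : ℝ)
    (hr : r = (μ {ω | s ω ≤ b ω}).toReal)
    (hrpos : 0 < r)
    (hx : (μ {ω | x ≤ b ω}).toReal = r / 2)
    (hy : (μ {ω | s ω ≤ y}).toReal = r / 2) :
    y ≤ x :=
  stmt0_general μ b s hb hindep r x y hr hrpos hx hy
end

section
/- Let $t_1, \ldots, t_n$ be independent random variables each taking values in $\{0\} \cup [1/2, 1]$, and let $\mathcal{F} \subseteq 2^{[n]}$ be a downward-closed family of subsets of $[n]$ containing $\emptyset$. Define $Z(t) = \max_{T \in \mathcal{F}} \sum_{i \in T} t_i$. Then $\mathrm{Var}[Z(t)] \leq \mathbb{E}[Z(t)]$. -/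
/-!
The proof combines the Efron–Stein inequality `Var f ≤ ∑ᵢ 𝔼 (f - fᵢ)²`, valid whenever `fᵢ` does
not depend on the `i`-th coordinate, with the choice `fᵢ = Z(t with tᵢ := 0)`. If `T` is an
optimal set for `t`, then `0 ≤ Z - fᵢ ≤ tᵢ · 1[i ∈ T] ≤ 1`, so `∑ᵢ (Z - fᵢ)² ≤ ∑_{i ∈ T} tᵢ = Z`.
Efron–Stein itself is proved by induction on the number of coordinates, splitting off the first
one with the law of total variance on a product space.
-/

open MeasureTheory ProbabilityTheory

section FinCons
variable {α : Type*} [MeasurableSpace α] {n : ℕ}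

lemma coe_piFinSuccAbove_zero_symm :
    ⇑(MeasurableEquiv.piFinSuccAbove (fun _ : Fin (n + 1) => α) 0).symm =
      fun p => Fin.cons p.1 p.2 := by
  ext p
  simp [MeasurableEquiv.piFinSuccAbove_symm_apply, Fin.insertNthEquiv, Fin.insertNth_zero']

lemma measurableEmbedding_finCons :
    MeasurableEmbedding (fun p : α × (Fin n → α) => (Fin.cons p.1 p.2 : Fin (n + 1) → α)) :=
  coe_piFinSuccAbove_zero_symm (α := α) ▸ MeasurableEquiv.measurableEmbedding _

lemma measurePreserving_finCons (ν : Fin (n + 1) → Measure α) [∀ i, SigmaFinite (ν i)] :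
    MeasurePreserving (fun p : α × (Fin n → α) => (Fin.cons p.1 p.2 : Fin (n + 1) → α))
      ((ν 0).prod (Measure.pi fun i => ν i.succ)) (Measure.pi ν) := by
  have h := (measurePreserving_piFinSuccAbove ν 0).symm
  simp only [Fin.succAbove_zero, coe_piFinSuccAbove_zero_symm] at h
  exact h

lemma measurable_finCons_left (x : Fin n → α) :
    Measurable fun y : α => (Fin.cons y x : Fin (n + 1) → α) :=
  measurableEmbedding_finCons.measurable.of_uncurry_right

lemma integral_integral_finCons (ν : Fin (n + 1) → Measure α) [∀ i, SigmaFinite (ν i)]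
    {φ : (Fin (n + 1) → α) → ℝ} (hφ : Integrable φ (Measure.pi ν)) :
    ∫ x, ∫ y, φ (Fin.cons y x) ∂ν 0 ∂Measure.pi (fun i => ν i.succ) = ∫ z, φ z ∂Measure.pi ν := by
  have hmp := measurePreserving_finCons ν
  rw [← hmp.integral_comp measurableEmbedding_finCons]
  exact (integral_prod_symm _ ((hmp.integrable_comp_emb measurableEmbedding_finCons).2 hφ)).symm

end FinCons

section Variance
variable {α β : Type*} [MeasurableSpace α] [MeasurableSpace β] {μ : Measure α} {ν : Measure β}

lemma memLp_of_abs_le [IsFiniteMeasure μ] {f : α → ℝ} (hf : Measurable f) {C : ℝ}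
    (hC : ∀ x, |f x| ≤ C) {p : ENNReal} : MemLp f p μ :=
  .of_bound hf.aestronglyMeasurable C (ae_of_all _ hC)

variable [IsProbabilityMeasure μ] [IsProbabilityMeasure ν]

lemma variance_le_integral_sq_sub {X : α → ℝ} (hX : AEStronglyMeasurable X μ) (c : ℝ) :
    Var[X; μ] ≤ ∫ a, (X a - c) ^ 2 ∂μ := by
  rw [← variance_sub_const hX c]
  exact variance_le_expectation_sq (hX.sub aestronglyMeasurable_const)

lemma abs_integral_le_of_abs_le {f : α → ℝ} {C : ℝ} (h : ∀ x, |f x| ≤ C) :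
    |∫ x, f x ∂μ| ≤ C := by
  simpa using norm_integral_le_of_norm_le_const (μ := μ) (f := f) (ae_of_all _ h)

lemma sq_integral_sub_integral_le {X Y : α → ℝ} (hX : MemLp X 2 μ) (hY : MemLp Y 2 μ) :
    (∫ a, X a ∂μ - ∫ a, Y a ∂μ) ^ 2 ≤ ∫ a, (X a - Y a) ^ 2 ∂μ := by
  have := variance_nonneg (X - Y) μ
  rw [variance_eq_sub (hX.sub hY)] at this
  simp only [Pi.sub_apply, Pi.pow_apply, sub_nonneg] at this
  rwa [← integral_sub (hX.integrable one_le_two) (hY.integrable one_le_two)]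

theorem variance_prod_eq_integral_variance_add_variance_integral {h : α × β → ℝ}
    (hh : Measurable h) {C : ℝ} (hC : ∀ z, |h z| ≤ C) :
    Var[h; μ.prod ν] =
      ∫ y, Var[fun x => h (x, y); μ] ∂ν + Var[fun y => ∫ x, h (x, y) ∂μ; ν] := by
  have hsec : ∀ y, MemLp (fun x => h (x, y)) 2 μ := fun y =>
    memLp_of_abs_le (hh.comp measurable_prodMk_right) fun x => hC _
  have hg : MemLp (fun y => ∫ x, h (x, y) ∂μ) 2 ν :=
    memLp_of_abs_le hh.stronglyMeasurable.integral_prod_left'.measurable fun y =>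
      abs_integral_le_of_abs_le fun x => hC (x, y)
  have hsq : Integrable (fun z => h z ^ 2) (μ.prod ν) := (memLp_of_abs_le hh hC).integrable_sq
  rw [variance_eq_sub (memLp_of_abs_le hh hC), variance_eq_sub hg]
  simp_rw [variance_eq_sub (hsec _), Pi.pow_apply]
  rw [integral_sub hsq.integral_prod_right hg.integrable_sq,
    integral_prod_symm _ hsq,
    integral_prod_symm _ (memLp_one_iff_integrable.mp (memLp_of_abs_le hh hC))]
  ring

end Variance

section EfronStein
variable {α : Type*} [MeasurableSpace α] {n : ℕ}

lemma Measurable.integral_finCons (μ : Measure α) [SFinite μ] {φ : (Fin (n + 1) → α) → ℝ}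
    (hφ : Measurable φ) : Measurable fun x : Fin n → α => ∫ y, φ (Fin.cons y x) ∂μ :=
  (hφ.comp measurableEmbedding_finCons.measurable).stronglyMeasurable.integral_prod_left'.measurable

lemma integral_le_integral_of_le_integral_finCons (ν : Fin (n + 1) → Measure α)
    [∀ i, SigmaFinite (ν i)] {u : (Fin n → α) → ℝ} {φ : (Fin (n + 1) → α) → ℝ}
    (hφ : Integrable φ (Measure.pi ν)) (hu : ∀ x, 0 ≤ u x)
    (h : ∀ x, u x ≤ ∫ y, φ (Fin.cons y x) ∂ν 0) :
    ∫ x, u x ∂Measure.pi (fun i => ν i.succ) ≤ ∫ z, φ z ∂Measure.pi ν := by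
  have hint := ((measurePreserving_finCons ν).integrable_comp_emb measurableEmbedding_finCons).2 hφ
  rw [← integral_integral_finCons ν hφ]
  exact integral_mono_of_nonneg (ae_of_all _ hu) hint.integral_prod_right (ae_of_all _ h)

/-- The **Efron–Stein inequality**. -/
theorem variance_pi_le_sum_integral_sq_sub : ∀ {n : ℕ} (ν : Fin n → Measure α)
    [∀ i, IsProbabilityMeasure (ν i)] {f : (Fin n → α) → ℝ} {F : Fin n → (Fin n → α) → ℝ}
    {C : ℝ}, Measurable f → (∀ i, Measurable (F i)) → (∀ x, |f x| ≤ C) →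
    (∀ i x, |F i x| ≤ C) → (∀ i x a, F i (Function.update x i a) = F i x) →
    Var[f; Measure.pi ν] ≤ ∑ i, ∫ x, (f x - F i x) ^ 2 ∂Measure.pi ν
  | 0, ν, _, f, F, C, hf, _, _, _, _ => by
    refine (variance_le_integral_sq_sub hf.aestronglyMeasurable (f default)).trans ?_
    simp [Subsingleton.elim _ (default : Fin 0 → α)]
  | n + 1, ν, _, f, F, C, hf, hF, hfC, hFC, hFi => by
    have : Nonempty α := nonempty_of_isProbabilityMeasure (ν 0)
    set π' := Measure.pi fun i : Fin n => ν i.succ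
    set g : (Fin n → α) → ℝ := fun x => ∫ y, f (Fin.cons y x) ∂ν 0
    set G : Fin n → (Fin n → α) → ℝ := fun (i : Fin n) (x : Fin n → α) =>
      ∫ y, F i.succ (Fin.cons y x) ∂ν 0
    have hdiff : ∀ j, Integrable (fun z => (f z - F j z) ^ 2) (Measure.pi ν) := fun j =>
      ((memLp_of_abs_le hf hfC).sub (memLp_of_abs_le (hF j) (hFC j))).integrable_sq
    have hsplit : Var[f; Measure.pi ν] =
        ∫ x, Var[fun y => f (Fin.cons y x); ν 0] ∂π' + Var[g; π'] := by
      rw [← (measurePreserving_finCons ν).variance_fun_comp hf.aemeasurable]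
      exact variance_prod_eq_integral_variance_add_variance_integral (μ := ν 0) (ν := π')
        (hf.comp measurableEmbedding_finCons.measurable) fun _ => hfC _
    have hfirst : ∫ x, Var[fun y => f (Fin.cons y x); ν 0] ∂π' ≤
        ∫ z, (f z - F 0 z) ^ 2 ∂Measure.pi ν := by
      refine integral_le_integral_of_le_integral_finCons ν (hdiff 0)
        (u := fun x => Var[fun y => f (Fin.cons y x); ν 0])
        (fun x => variance_nonneg _ _) fun x => ?_
      set a : α := Classical.arbitrary α
      have hF0 : ∀ y, F 0 (Fin.cons y x) = F 0 (Fin.cons a x) := fun y => by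
        rw [← hFi 0 (Fin.cons a x) y, Fin.update_cons_zero]
      simp_rw [hF0]
      exact variance_le_integral_sq_sub (hf.comp (measurable_finCons_left x)).aestronglyMeasurable _
    have hrest : Var[g; π'] ≤ ∑ i : Fin n, ∫ z, (f z - F i.succ z) ^ 2 ∂Measure.pi ν := by
      refine (variance_pi_le_sum_integral_sq_sub (fun i => ν i.succ) (f := g) (F := G) (C := C)
        (hf.integral_finCons _) (fun i => (hF i.succ).integral_finCons _)
        (fun x => abs_integral_le_of_abs_le fun _ => hfC _)
        (fun i x => abs_integral_le_of_abs_le fun _ => hFC _ _) fun i x a => ?_).trans ?_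
      · simp only [G, Fin.cons_update, hFi]
      refine Finset.sum_le_sum fun i _ => integral_le_integral_of_le_integral_finCons ν
        (hdiff i.succ) (fun x => sq_nonneg _) fun x => ?_
      exact sq_integral_sub_integral_le
        (memLp_of_abs_le (hf.comp (measurable_finCons_left x)) fun _ => hfC _)
        (memLp_of_abs_le ((hF i.succ).comp (measurable_finCons_left x)) fun _ => hFC _ _)
    rw [hsplit, Fin.sum_univ_succ]
    exact add_le_add hfirst hrest

theorem variance_pi_le_integral_of_sum_sq_sub_update_le {n : ℕ} (ν : Fin n → Measure α)
    [∀ i, IsProbabilityMeasure (ν i)] {f : (Fin n → α) → ℝ} (hf : Measurable f) {C : ℝ}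
    (hfC : ∀ x, |f x| ≤ C) (a : α)
    (hself : ∀ x, ∑ i, (f x - f (Function.update x i a)) ^ 2 ≤ f x) :
    Var[f; Measure.pi ν] ≤ ∫ x, f x ∂Measure.pi ν := by
  have hfa : ∀ i, Measurable fun x => f (Function.update x i a) := fun i =>
    hf.comp measurable_update_left
  have hdiff : ∀ i, Integrable (fun x => (f x - f (Function.update x i a)) ^ 2) (Measure.pi ν) :=
    fun i => ((memLp_of_abs_le hf hfC).sub (memLp_of_abs_le (hfa i) fun _ => hfC _)).integrable_sq
  calc Var[f; Measure.pi ν]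
      ≤ ∑ i, ∫ x, (f x - f (Function.update x i a)) ^ 2 ∂Measure.pi ν :=
        variance_pi_le_sum_integral_sq_sub ν hf hfa hfC (fun _ _ => hfC _) fun _ _ _ => by
          rw [Function.update_idem]
    _ = ∫ x, ∑ i, (f x - f (Function.update x i a)) ^ 2 ∂Measure.pi ν :=
        (integral_finsetSum _ fun i _ => hdiff i).symm
    _ ≤ ∫ x, f x ∂Measure.pi ν :=
        integral_mono (integrable_finsetSum _ fun i _ => hdiff i)
          (memLp_one_iff_integrable.mp (memLp_of_abs_le hf hfC)) hself

end EfronStein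

lemma ProbabilityTheory.iIndepFun.measurePreserving_pi {ι Ω β : Type*} [Fintype ι]
    [MeasurableSpace Ω] [MeasurableSpace β] {μ : Measure Ω} {X : ι → Ω → β}
    (h : iIndepFun X μ) (hX : ∀ i, Measurable (X i)) :
    MeasurePreserving (fun ω i => X i ω) μ (Measure.pi fun i => μ.map (X i)) :=
  ⟨measurable_pi_lambda _ hX, h.map_fun_eq_pi_map fun i => (hX i).aemeasurable⟩

section MaxWeight
variable {ι : Type*} (𝓕 : Finset (Finset ι)) (h𝓕 : 𝓕.Nonempty)

noncomputable def maxWeight (x : ι → ℝ) : ℝ :=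
  𝓕.sup' h𝓕 fun T => ∑ i ∈ T, x i

variable {𝓕 h𝓕}

lemma sum_le_maxWeight {T : Finset ι} (hT : T ∈ 𝓕) (x : ι → ℝ) :
    ∑ i ∈ T, x i ≤ maxWeight 𝓕 h𝓕 x :=
  Finset.le_sup' (fun T => ∑ i ∈ T, x i) hT

lemma maxWeight_mono {x y : ι → ℝ} (hxy : x ≤ y) : maxWeight 𝓕 h𝓕 x ≤ maxWeight 𝓕 h𝓕 y :=
  Finset.sup'_mono_fun fun _ _ => Finset.sum_le_sum fun i _ => hxy i

lemma maxWeight_nonneg {x : ι → ℝ} (hx : 0 ≤ x) : 0 ≤ maxWeight 𝓕 h𝓕 x :=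
  (Finset.sum_nonneg fun i _ => hx i).trans (sum_le_maxWeight h𝓕.choose_spec x)

lemma maxWeight_le_card [Fintype ι] {x : ι → ℝ} (hx : x ≤ 1) :
    maxWeight 𝓕 h𝓕 x ≤ Fintype.card ι :=
  Finset.sup'_le _ _ fun T _ => calc
    ∑ i ∈ T, x i ≤ T.card := by simpa using Finset.sum_le_sum fun i (_ : i ∈ T) => hx i
    _ ≤ Fintype.card ι := by exact_mod_cast T.card_le_univ

lemma abs_maxWeight_coe_le [Fintype ι] (x : ι → unitInterval) :
    |maxWeight 𝓕 h𝓕 fun i => (x i : ℝ)| ≤ Fintype.card ι :=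
  abs_le.2 ⟨by linarith [maxWeight_nonneg (h𝓕 := h𝓕) fun i => (x i).2.1],
    maxWeight_le_card fun i => (x i).2.2⟩

lemma measurable_maxWeight : Measurable (maxWeight 𝓕 h𝓕) := by
  have := Finset.measurable_sup' h𝓕 (f := fun T (x : ι → ℝ) => ∑ i ∈ T, x i) fun T _ =>
    Finset.measurable_sum T fun i _ => measurable_pi_apply i
  convert this using 1
  ext x
  simp [maxWeight, Finset.sup'_apply]

variable [DecidableEq ι]

lemma sum_eq_sum_update_zero_add (T : Finset ι) (x : ι → ℝ) (i : ι) :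
    ∑ j ∈ T, x j = ∑ j ∈ T, Function.update x i 0 j + if i ∈ T then x i else 0 := by
  by_cases hi : i ∈ T
  · rw [Finset.sum_update_of_mem hi, Finset.sum_eq_add_sum_sdiff_singleton_of_mem hi, if_pos hi]
    ring
  · rw [Finset.sum_update_of_notMem hi, if_neg hi, add_zero]

lemma maxWeight_update_zero_le {x : ι → ℝ} {i : ι} (hx : 0 ≤ x i) :
    maxWeight 𝓕 h𝓕 (Function.update x i 0) ≤ maxWeight 𝓕 h𝓕 x :=
  maxWeight_mono (update_le_iff.2 ⟨hx, fun _ _ => le_rfl⟩)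

lemma maxWeight_le_maxWeight_update_zero_add {x : ι → ℝ} {T : Finset ι} (hT : T ∈ 𝓕)
    (hTx : maxWeight 𝓕 h𝓕 x = ∑ j ∈ T, x j) (i : ι) :
    maxWeight 𝓕 h𝓕 x ≤ maxWeight 𝓕 h𝓕 (Function.update x i 0) + if i ∈ T then x i else 0 := by
  rw [hTx, sum_eq_sum_update_zero_add T x i]
  exact add_le_add_left (sum_le_maxWeight hT _) _

theorem sum_sq_maxWeight_sub_update_zero_le [Fintype ι] {x : ι → ℝ} (hx₀ : 0 ≤ x)
    (hx₁ : x ≤ 1) :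
    ∑ i, (maxWeight 𝓕 h𝓕 x - maxWeight 𝓕 h𝓕 (Function.update x i 0)) ^ 2 ≤ maxWeight 𝓕 h𝓕 x := by
  obtain ⟨T, hT, hTx⟩ := Finset.exists_mem_eq_sup' h𝓕 fun T => ∑ i ∈ T, x i
  calc ∑ i, (maxWeight 𝓕 h𝓕 x - maxWeight 𝓕 h𝓕 (Function.update x i 0)) ^ 2
      ≤ ∑ i, if i ∈ T then x i else 0 := Finset.sum_le_sum fun i _ => by
        have h₀ := maxWeight_update_zero_le (𝓕 := 𝓕) (h𝓕 := h𝓕) (hx₀ i)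
        have h₁ := maxWeight_le_maxWeight_update_zero_add hT hTx i
        have h₂ : (if i ∈ T then x i else 0) ≤ 1 := by split_ifs; exacts [hx₁ i, zero_le_one]
        nlinarith
    _ = maxWeight 𝓕 h𝓕 x := by rw [Finset.sum_ite_mem, Finset.univ_inter, ← hTx]; rfl

lemma sum_sq_maxWeight_coe_sub_update_zero_le [Fintype ι] (x : ι → unitInterval) :
    ∑ i, ((maxWeight 𝓕 h𝓕 fun j => (x j : ℝ)) -
      maxWeight 𝓕 h𝓕 fun j => (Function.update x i 0 j : ℝ)) ^ 2 ≤
      maxWeight 𝓕 h𝓕 fun j => (x j : ℝ) := by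
  simpa [Function.apply_update (fun _ => ((↑) : unitInterval → ℝ))] using
    sum_sq_maxWeight_sub_update_zero_le (h𝓕 := h𝓕) (fun i => (x i).2.1) fun i => (x i).2.2

end MaxWeight

theorem stmt3_general {Ω : Type*} [MeasurableSpace Ω] (μ : Measure Ω) [IsProbabilityMeasure μ]
    (n : ℕ) (t : Fin n → Ω → ℝ)
    (hmeas : ∀ i, Measurable (t i))
    (hindep : ProbabilityTheory.iIndepFun t μ)
    (hval : ∀ i ω, t i ω = 0 ∨ t i ω ∈ Set.Icc (1/2 : ℝ) 1)
    (𝓕 : Finset (Finset (Fin n))) (hempty : ∅ ∈ 𝓕)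
    (Z : Ω → ℝ)
    (hZ : ∀ ω, Z ω = 𝓕.sup' ⟨∅, hempty⟩ (fun T => ∑ i ∈ T, t i ω)) :
    ProbabilityTheory.variance Z μ ≤ ∫ ω, Z ω ∂μ := by
  -- Read `t` in the cube `[0, 1]ⁿ`, where `Z` is bounded and self-bounding everywhere.
  set X : Fin n → Ω → unitInterval := fun i => Set.projIcc 0 1 zero_le_one ∘ t i
  have hX : ∀ i, Measurable (X i) := fun i => continuous_projIcc.measurable.comp (hmeas i)
  have : ∀ i, IsProbabilityMeasure (μ.map (X i)) := fun i =>
    Measure.isProbabilityMeasure_map (hX i).aemeasurable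
  have hlaw := (hindep.comp _ fun _ => continuous_projIcc.measurable).measurePreserving_pi hX
  set f : (Fin n → unitInterval) → ℝ := fun x => maxWeight 𝓕 ⟨∅, hempty⟩ fun i => (x i : ℝ)
  have hf : Measurable f := measurable_maxWeight.comp <|
    measurable_pi_lambda _ fun i => measurable_subtype_coe.comp (measurable_pi_apply i)
  have hZf : Z = fun ω => f fun i => X i ω := funext fun ω => by
    have ht : ∀ i, t i ω ∈ Set.Icc (0 : ℝ) 1 := fun i => (hval i ω).elim
      (fun h => by simp [h]) fun h => ⟨by linarith [h.1], h.2⟩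
    simp [hZ, f, X, maxWeight, Set.projIcc_of_mem _ (ht _)]
  have hmean : ∫ ω, f (fun i => X i ω) ∂μ = ∫ x, f x ∂Measure.pi fun i => μ.map (X i) := by
    rw [← hlaw.map_eq,
      integral_map hlaw.measurable.aemeasurable (hlaw.map_eq ▸ hf.aestronglyMeasurable)]
  rw [hZf, hlaw.variance_fun_comp hf.aemeasurable, hmean]
  exact variance_pi_le_integral_of_sum_sq_sub_update_le _ hf
    (fun x => by simpa using abs_maxWeight_coe_le x) 0 sum_sq_maxWeight_coe_sub_update_zero_le

/-- For independent random variables valued in `{0} ∪ [1/2, 1]` and a downward-closed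
family `𝓕` containing `∅`, the maximum-weight feasible set value
`Z(t) = max_{T ∈ 𝓕} ∑_{i ∈ T} t_i` satisfies `Var[Z] ≤ E[Z]`. -/
theorem stmt3 {Ω : Type*} [MeasurableSpace Ω] (μ : Measure Ω) [IsProbabilityMeasure μ]
    (n : ℕ) (t : Fin n → Ω → ℝ)
    (hmeas : ∀ i, Measurable (t i))
    (hindep : ProbabilityTheory.iIndepFun t μ)
    (hval : ∀ i ω, t i ω = 0 ∨ t i ω ∈ Set.Icc (1/2 : ℝ) 1)
    (𝓕 : Finset (Finset (Fin n))) (hempty : ∅ ∈ 𝓕)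
    (hdc : ∀ S ∈ 𝓕, ∀ S' ⊆ S, S' ∈ 𝓕)
    (Z : Ω → ℝ)
    (hZ : ∀ ω, Z ω = 𝓕.sup' ⟨∅, hempty⟩ (fun T => ∑ i ∈ T, t i ω)) :
    ProbabilityTheory.variance Z μ ≤ ∫ ω, Z ω ∂μ :=
  stmt3_general μ n t hmeas hindep hval 𝓕 hempty Z hZ
end

section
/- Let $q_1, \ldots, q_n \in [0, 1]$ with $\sum_{j=1}^n q_j \leq 1$, fixing $i \in [n]$. Define $\hat{x}_i = \frac{q_i}{2} \cdot \prod_{j \neq i} \left(1 - \frac{q_j}{2}\right)$. Then $\frac{q_i + q_i^2}{4} \leq \hat{x}_i \leq \frac{q_i}{2}$. -/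
/-! Each factor `1 - q j / 2` lies in `[0, 1]`, so the product is at most `1`; by the Weierstrass
product inequality it is at least `1 - ∑_{j ≠ i} q j / 2 ≥ 1 - (1 - q i) / 2 = (1 + q i) / 2`. -/

open Finset

theorem Finset.one_sub_sum_le_prod_one_sub {ι R : Type*} [CommRing R] [PartialOrder R]
    [IsOrderedRing R] (s : Finset ι) {f : ι → R} (h0 : ∀ j ∈ s, 0 ≤ f j)
    (h1 : ∀ j ∈ s, f j ≤ 1) : 1 - ∑ j ∈ s, f j ≤ ∏ j ∈ s, (1 - f j) := by
  classical
  induction s using Finset.induction_on with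
  | empty => simp
  | insert a s ha ih =>
    rw [sum_insert ha, prod_insert ha]
    have hfa : 0 ≤ f a := h0 a (mem_insert_self a s)
    have hfa' : 0 ≤ 1 - f a := sub_nonneg.2 (h1 a (mem_insert_self a s))
    have hsum : 0 ≤ ∑ j ∈ s, f j := sum_nonneg fun j hj ↦ h0 j (mem_insert_of_mem hj)
    have ih := ih (fun j hj ↦ h0 j (mem_insert_of_mem hj)) (fun j hj ↦ h1 j (mem_insert_of_mem hj))
    calc 1 - (f a + ∑ j ∈ s, f j)
        ≤ 1 - (f a + ∑ j ∈ s, f j) + f a * ∑ j ∈ s, f j := le_add_of_nonneg_right (mul_nonneg hfa hsum)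
      _ = (1 - f a) * (1 - ∑ j ∈ s, f j) := by ring
      _ ≤ (1 - f a) * ∏ j ∈ s, (1 - f j) := mul_le_mul_of_nonneg_left ih hfa'

/-- Allocation coupling bound for the SAPP mechanism: with `q ∈ [0,1]ⁿ`, `∑ q ≤ 1`,
the trade probability `x̂ᵢ = (qᵢ/2) ∏_{j≠i}(1 - qⱼ/2)` satisfies
`(qᵢ + qᵢ²)/4 ≤ x̂ᵢ ≤ qᵢ/2`. -/
theorem stmt7 (n : ℕ) (q : Fin n → ℝ) (hq : ∀ i, q i ∈ Set.Icc (0:ℝ) 1)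
    (hsum : ∑ j, q j ≤ 1) (i : Fin n)
    (xhat : ℝ)
    (hxhat : xhat = q i / 2 * ∏ j ∈ Finset.univ.erase i, (1 - q j / 2)) :
    (q i + (q i)^2) / 4 ≤ xhat ∧ xhat ≤ q i / 2 := by
  subst hxhat
  have hqi : 0 ≤ q i / 2 := by linarith [(hq i).1]
  have h_le : ∏ j ∈ univ.erase i, (1 - q j / 2) ≤ 1 :=
    prod_le_one (fun j _ ↦ by linarith [(hq j).2]) (fun j _ ↦ by linarith [(hq j).1])
  have h_ge : (1 + q i) / 2 ≤ ∏ j ∈ univ.erase i, (1 - q j / 2) :=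
    calc (1 + q i) / 2 ≤ 1 - (∑ j ∈ univ.erase i, q j) / 2 := by
          rw [sum_erase_eq_sub (mem_univ i)]; linarith
      _ = 1 - ∑ j ∈ univ.erase i, q j / 2 := by rw [sum_div]
      _ ≤ _ := one_sub_sum_le_prod_one_sub _ (fun j _ ↦ by linarith [(hq j).1])
          (fun j _ ↦ by linarith [(hq j).2])
  constructor
  · calc (q i + q i ^ 2) / 4 = q i / 2 * ((1 + q i) / 2) := by ring
      _ ≤ _ := mul_le_mul_of_nonneg_left h_ge hqi
  · calc q i / 2 * ∏ j ∈ univ.erase i, (1 - q j / 2) ≤ q i / 2 * 1 :=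
          mul_le_mul_of_nonneg_left h_le hqi
      _ = q i / 2 := mul_one _
end

section
/- Let $b$ be a continuous real-valued random variable with CDF $F$, density $f$, and monotone non-decreasing ironed virtual value function $\widetilde{\varphi}$. Then for any $p$ in the support, $\int_p^\infty \widetilde{\varphi}(x) f(x)\,dx = p \cdot (1 - F(p))$. -/
open MeasureTheory Filter Set

/-- The integrand `x f(x) - (1 - F(x))` is the derivative of `-x (1 - F(x))`, so integration by
parts against the vanishing tail leaves only the boundary term at `p`. -/
theorem integral_Ioi_mul_deriv_sub_tail {F f : ℝ → ℝ} {p : ℝ}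
    (hderiv : ∀ x ∈ Ici p, HasDerivAt F (f x) x)
    (htail : Tendsto (fun x => x * (1 - F x)) atTop (nhds 0))
    (hint : IntegrableOn (fun x => x * f x - (1 - F x)) (Ioi p)) :
    ∫ x in Ioi p, (x * f x - (1 - F x)) = p * (1 - F p) := by
  have hrevenue : ∀ x ∈ Ici p,
      HasDerivAt (fun x => -(x * (1 - F x))) (x * f x - (1 - F x)) x := by
    intro x hx
    have h : HasDerivAt (fun x => -(x * (1 - F x))) (-(1 * (1 - F x) + x * (0 - f x))) x :=
      ((hasDerivAt_id' x).mul ((hasDerivAt_const x 1).sub (hderiv x hx))).neg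
    convert h using 1
    ring
  have hcont : ContinuousWithinAt (fun x => -(x * (1 - F x))) (Ici p) p :=
    (hrevenue p self_mem_Ici).continuousAt.continuousWithinAt
  rw [integral_Ioi_of_hasDerivAt_of_tendsto hcont
    (fun x hx => hrevenue x (mem_Ici_of_Ioi hx)) hint (by simpa using htail.neg)]
  ring

theorem stmt10_general (F f : ℝ → ℝ) (hderiv : ∀ x, HasDerivAt F (f x) x)
    (hfpos : ∀ x, 0 < f x)
    (htail : Filter.Tendsto (fun x => x * (1 - F x)) Filter.atTop (nhds 0))
    (p : ℝ)
    (hint : IntegrableOn (fun x => (x - (1 - F x) / f x) * f x) (Set.Ioi p)) :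
    ∫ x in Set.Ioi p, (x - (1 - F x) / f x) * f x = p * (1 - F p) := by
  have hvirtual : (fun x => (x - (1 - F x) / f x) * f x) = fun x => x * f x - (1 - F x) := by
    funext x
    field_simp [(hfpos x).ne']
  rw [hvirtual] at hint ⊢
  exact integral_Ioi_mul_deriv_sub_tail (fun x _ => hderiv x) htail hint

/-- Myerson's lemma identity: the expected (monotone) virtual value above a price `p`
equals the revenue of posting price `p`: `∫_p^∞ φ(x) f(x) dx = p (1 - F(p))`,
where `φ(x) = x - (1 - F(x))/f(x)`. -/
theorem stmt10 (F f : ℝ → ℝ) (hderiv : ∀ x, HasDerivAt F (f x) x)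
    (hfpos : ∀ x, 0 < f x)
    (hF1 : Filter.Tendsto F Filter.atTop (nhds 1))
    (hmono : Monotone (fun x => x - (1 - F x) / f x))
    (htail : Filter.Tendsto (fun x => x * (1 - F x)) Filter.atTop (nhds 0))
    (p : ℝ)
    (hint : IntegrableOn (fun x => (x - (1 - F x) / f x) * f x) (Set.Ioi p)) :
    ∫ x in Set.Ioi p, (x - (1 - F x) / f x) * f x = p * (1 - F p) :=
  stmt10_general F f hderiv hfpos htail p hint
end

section
/- Let $v_1, \ldots, v_n$ be nonnegative random variables (not necessarily independent as a vector, but the claim is about a fixed coupling), let $\mathcal{F} \subseteq 2^{[n]}$ be a family of feasible sets, let $\hat{S}(v) \in \argmax_{S \in \mathcal{F}} \sum_{i \in S} v_i$ be measurable, and for each $i$ let $q_i = \Pr[i \in \hat{S}(v)]$ and let $\xi_i \geq 0$ satisfy $\Pr[v_i \geq \xi_i] = q_i$. If $v_1, \ldots, v_n$ are mutually independent, then $\mathbb{E}\left[\max_{S \in \mathcal{F}} \sum_{i \in S} v_i\right] \leq \sum_{i=1}^n \mathbb{E}[v_i \cdot \mathbb{1}[v_i \geq \xi_i]]$. -/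
open MeasureTheory

/-! Since `Ŝ` is optimal, the maximum equals `∑ᵢ vᵢ · 𝟙[i ∈ Ŝ]`, so its expectation splits
over the items. For each item the events `{i ∈ Ŝ}` and `{ξᵢ ≤ vᵢ}` have the same probability,
hence so do their two differences; trading `{i ∈ Ŝ} \ {ξᵢ ≤ vᵢ}`, where `vᵢ < ξᵢ`, for
`{ξᵢ ≤ vᵢ} \ {i ∈ Ŝ}`, where `vᵢ ≥ ξᵢ`, can only increase the integral of `vᵢ`. -/

theorem setIntegral_le_setIntegral_setOf_le_of_measure_eq {Ω : Type*} [MeasurableSpace Ω]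
    {μ : Measure Ω} [IsFiniteMeasure μ] {v : Ω → ℝ} (hv : Measurable v)
    (hint : Integrable v μ) {ξ : ℝ} {A : Set Ω} (hA : MeasurableSet A)
    (hμA : μ A = μ {ω | ξ ≤ v ω}) :
    ∫ ω in A, v ω ∂μ ≤ ∫ ω in {ω | ξ ≤ v ω}, v ω ∂μ := by
  set B := {ω | ξ ≤ v ω}
  have hB : MeasurableSet B := measurableSet_le measurable_const hv
  have hA_diff : ∫ ω in A \ B, v ω ∂μ ≤ ξ * μ.real (A \ B) := by
    simpa [mul_comm] using setIntegral_mono_on hint.integrableOn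
      (integrableOn_const (measure_ne_top μ _)) (hA.diff hB) fun ω hω => (not_le.1 hω.2).le
  have hB_diff : ξ * μ.real (B \ A) ≤ ∫ ω in B \ A, v ω ∂μ :=
    setIntegral_ge_of_const_le_real (hB.diff hA) (measure_ne_top μ _) (fun ω hω => hω.1)
      hint.integrableOn
  have hdiff : μ.real (A \ B) = μ.real (B \ A) := by
    rw [measureReal_def, measureReal_def, measure_sdiff_symm hA.nullMeasurableSet
      hB.nullMeasurableSet hμA (measure_ne_top μ _)]
  calc ∫ ω in A, v ω ∂μ = ∫ ω in A ∩ B, v ω ∂μ + ∫ ω in A \ B, v ω ∂μ :=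
        (integral_inter_add_sdiff hB hint.integrableOn).symm
    _ ≤ ∫ ω in B ∩ A, v ω ∂μ + ∫ ω in B \ A, v ω ∂μ := by
      rw [Set.inter_comm]; rw [hdiff] at hA_diff; linarith
    _ = ∫ ω in B, v ω ∂μ := integral_inter_add_sdiff hA hint.integrableOn

theorem stmt12_general {Ω : Type*} [MeasurableSpace Ω] (μ : Measure Ω) [IsProbabilityMeasure μ]
    (n : ℕ) (v : Fin n → Ω → ℝ) (hmeas : ∀ i, Measurable (v i))
    (hint : ∀ i, Integrable (v i) μ)
    (𝓕 : Finset (Finset (Fin n))) (h𝓕 : 𝓕.Nonempty)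
    (Shat : Ω → Finset (Fin n))
    (hSmem : ∀ ω, Shat ω ∈ 𝓕)
    (hSopt : ∀ ω, ∀ T ∈ 𝓕, ∑ i ∈ T, v i ω ≤ ∑ i ∈ Shat ω, v i ω)
    (hSmeas : ∀ i, MeasurableSet {ω | i ∈ Shat ω})
    (q ξ : Fin n → ℝ)
    (hq : ∀ i, q i = (μ {ω | i ∈ Shat ω}).toReal)
    (hξ : ∀ i, (μ {ω | ξ i ≤ v i ω}).toReal = q i) :
    ∫ ω, 𝓕.sup' h𝓕 (fun T => ∑ i ∈ T, v i ω) ∂μ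
      ≤ ∑ i, ∫ ω, (if ξ i ≤ v i ω then v i ω else 0) ∂μ := by
  have hmax : ∀ ω, 𝓕.sup' h𝓕 (fun T => ∑ i ∈ T, v i ω)
      = ∑ i, {ω | i ∈ Shat ω}.indicator (v i) ω := fun ω => by
    rw [le_antisymm (Finset.sup'_le _ _ (hSopt ω))
      (Finset.le_sup' (fun T => ∑ i ∈ T, v i ω) (hSmem ω))]
    simp [Set.indicator_apply, Finset.sum_ite_mem]
  have hμ_eq : ∀ i, μ {ω | i ∈ Shat ω} = μ {ω | ξ i ≤ v i ω} := fun i =>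
    (ENNReal.toReal_eq_toReal_iff' (measure_ne_top μ _) (measure_ne_top μ _)).1
      ((hq i).symm.trans (hξ i).symm)
  simp_rw [hmax]
  rw [integral_finsetSum _ fun i _ => (hint i).indicator (hSmeas i)]
  refine Finset.sum_le_sum fun i _ => ?_
  rw [integral_indicator (hSmeas i)]
  calc ∫ ω in {ω | i ∈ Shat ω}, v i ω ∂μ ≤ ∫ ω in {ω | ξ i ≤ v i ω}, v i ω ∂μ :=
        setIntegral_le_setIntegral_setOf_le_of_measure_eq (hmeas i) (hint i) (hSmeas i)
          (hμ_eq i)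
    _ = ∫ ω, (if ξ i ≤ v i ω then v i ω else 0) ∂μ := by
        rw [← integral_indicator (measurableSet_le measurable_const (hmeas i))]
        rfl

/-- The expected maximum-weight feasible set is bounded by the sum over items of
the expectation of `vᵢ` restricted to its top `qᵢ`-quantile, where
`qᵢ = Pr[i ∈ Ŝ(v)]`. -/
theorem stmt12 {Ω : Type*} [MeasurableSpace Ω] (μ : Measure Ω) [IsProbabilityMeasure μ]
    (n : ℕ) (v : Fin n → Ω → ℝ) (hmeas : ∀ i, Measurable (v i))
    (hnn : ∀ i ω, 0 ≤ v i ω) (hint : ∀ i, Integrable (v i) μ)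
    (hindep : ProbabilityTheory.iIndepFun v μ)
    (𝓕 : Finset (Finset (Fin n))) (h𝓕 : 𝓕.Nonempty)
    (Shat : Ω → Finset (Fin n))
    (hSmem : ∀ ω, Shat ω ∈ 𝓕)
    (hSopt : ∀ ω, ∀ T ∈ 𝓕, ∑ i ∈ T, v i ω ≤ ∑ i ∈ Shat ω, v i ω)
    (hSmeas : ∀ i, MeasurableSet {ω | i ∈ Shat ω})
    (q ξ : Fin n → ℝ)
    (hq : ∀ i, q i = (μ {ω | i ∈ Shat ω}).toReal)
    (hξnn : ∀ i, 0 ≤ ξ i)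
    (hξ : ∀ i, (μ {ω | ξ i ≤ v i ω}).toReal = q i) :
    ∫ ω, 𝓕.sup' h𝓕 (fun T => ∑ i ∈ T, v i ω) ∂μ
      ≤ ∑ i, ∫ ω, (if ξ i ≤ v i ω then v i ω else 0) ∂μ :=
  stmt12_general μ n v hmeas hint 𝓕 h𝓕 Shat hSmem hSopt hSmeas q ξ hq hξ
end

section
/- Prophet inequality threshold guarantee: Let $v_1, \ldots, v_n$ be independent nonnegative random variables and set the threshold $\xi = \frac{1}{2} \mathbb{E}[\max_i v_i]$. Consider the stopping rule that accepts the first $i$ (in index order) with $v_i \geq \xi$. Then the expected value of the accepted variable is at least $\frac{1}{2} \mathbb{E}[\max_i v_i]$. -/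
/-!
Let `p` be the probability that no `vᵢ` reaches `ξ`. Whenever some `vᵢ` reaches `ξ` the rule
collects `ξ`, and on top of it the excess `(vᵢ - ξ)⁺` of the accepted index; this excess is
collected at least whenever all the other `vⱼ` stay below `ξ`, an event independent of `vᵢ`
and of probability at least `p`. Hence
`E[reward] ≥ ξ (1 - p) + p ∑ᵢ E[(vᵢ - ξ)⁺] ≥ ξ (1 - p) + p (E[maxᵢ vᵢ] - ξ)`,
and the right-hand side equals `ξ` exactly when `ξ = E[maxᵢ vᵢ] / 2`.
-/

open MeasureTheory ProbabilityTheory Finset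

lemma Finset.sup'_sub_le_sum_posPart {ι α : Type*} [AddCommGroup α] [LinearOrder α]
    [IsOrderedAddMonoid α] {s : Finset ι} (hs : s.Nonempty) (f : ι → α) (c : α) :
    s.sup' hs f - c ≤ ∑ i ∈ s, (f i - c)⁺ :=
  sub_le_iff_le_add'.2 <| sup'_le hs f fun i hi => sub_le_iff_le_add'.1 <|
    (le_posPart (f i - c)).trans (single_le_sum (fun j _ => posPart_nonneg (f j - c)) hi)

lemma MeasureTheory.integrable_finset_sup' {ι Ω : Type*} [MeasurableSpace Ω] {μ : Measure Ω}
    {s : Finset ι} (hs : s.Nonempty) {f : ι → Ω → ℝ} (hf : ∀ i ∈ s, Integrable (f i) μ) :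
    Integrable (fun ω => s.sup' hs (f · ω)) μ := by
  convert Finset.sup'_induction hs f (p := (Integrable · μ)) (fun _ h₁ _ h₂ => h₁.sup h₂) hf
    using 1
  exact funext fun ω => (Finset.sup'_apply hs f ω).symm

lemma integral_sup'_sub_le_sum_integral_posPart {ι Ω : Type*} [MeasurableSpace Ω]
    {μ : Measure Ω} [IsProbabilityMeasure μ] {s : Finset ι} (hs : s.Nonempty) {f : ι → Ω → ℝ}
    (hf : ∀ i ∈ s, Integrable (f i) μ) (c : ℝ) :
    ∫ ω, s.sup' hs (f · ω) ∂μ - c ≤ ∑ i ∈ s, ∫ ω, (f i ω - c)⁺ ∂μ := by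
  have hpos : ∀ i ∈ s, Integrable (fun ω => (f i ω - c)⁺) μ :=
    fun i hi => ((hf i hi).sub (integrable_const c)).pos_part
  have hsup := integrable_finset_sup' hs hf
  calc ∫ ω, s.sup' hs (f · ω) ∂μ - c = ∫ ω, (s.sup' hs (f · ω) - c) ∂μ := by
        rw [integral_sub hsup (integrable_const c), integral_const, probReal_univ, one_smul]
    _ ≤ ∫ ω, ∑ i ∈ s, (f i ω - c)⁺ ∂μ :=
        integral_mono (hsup.sub (integrable_const c)) (integrable_finsetSum s hpos)
          fun ω => sup'_sub_le_sum_posPart hs _ c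
    _ = ∑ i ∈ s, ∫ ω, (f i ω - c)⁺ ∂μ := integral_finsetSum s hpos

lemma ProbabilityTheory.iIndepFun.setIntegral_preimage_eq_mul {ι Ω β : Type*}
    [MeasurableSpace Ω] [MeasurableSpace β] [Fintype ι] [DecidableEq ι] {μ : Measure Ω}
    {v : ι → Ω → β} (hindep : iIndepFun v μ) (hmeas : ∀ i, Measurable (v i)) (i : ι)
    {s : Set (({i}ᶜ : Finset ι) → β)} (hs : MeasurableSet s) {f : β → ℝ} (hf : Measurable f) :
    ∫ ω in (fun ω (j : ({i}ᶜ : Finset ι)) => v j ω) ⁻¹' s, f (v i ω) ∂μ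
      = μ.real ((fun ω (j : ({i}ᶜ : Finset ι)) => v j ω) ⁻¹' s) * ∫ ω, f (v i ω) ∂μ := by
  have hothers : Measurable fun ω (j : ({i}ᶜ : Finset ι)) => v j ω := by fun_prop
  have hindep' : IndepFun (fun ω (j : ({i}ᶜ : Finset ι)) => v j ω) (v i) μ :=
    (hindep.indepFun_finset {i}ᶜ {i} disjoint_compl_left hmeas).comp measurable_id
      (measurable_pi_apply (⟨i, mem_singleton_self i⟩ : ({i} : Finset ι)))
  exact ((IndepFun_iff_Indep _ _ _).1 hindep').setIntegral_eq_mul hothers.comap_le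
    (hmeas i).aemeasurable ⟨s, hs, rfl⟩ hf.aestronglyMeasurable

section Threshold

variable {ι Ω : Type*} (v : ι → Ω → ℝ) (ξ : ℝ)

def allBelow : Set Ω := {ω | ∀ i, v i ω < ξ}

def othersBelow (i : ι) : Set Ω := {ω | ∀ j ≠ i, v j ω < ξ}

def stopsAt [Preorder ι] (i : ι) : Set Ω := {ω | IsLeast {j | ξ ≤ v j ω} i}

noncomputable def thresholdReward [Fintype ι] [LinearOrder ι] (ω : Ω) : ℝ :=
  if h : (univ.filter fun i => ξ ≤ v i ω).Nonempty
  then v ((univ.filter fun i => ξ ≤ v i ω).min' h) ω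
  else 0

lemma allBelow_subset_othersBelow (i : ι) : allBelow v ξ ⊆ othersBelow v ξ i :=
  fun _ hω j _ => hω j

variable {v ξ}

lemma thresholdReward_eq_sum_indicator [Fintype ι] [LinearOrder ι] (ω : Ω) :
    thresholdReward v ξ ω = ∑ i, (stopsAt v ξ i).indicator (v i) ω := by
  unfold thresholdReward
  split_ifs with h
  · have hleast : IsLeast {j | ξ ≤ v j ω} (min' _ h) := by simpa using isLeast_min' _ h
    rw [sum_eq_single_of_mem _ (mem_univ (min' _ h)),
      Set.indicator_of_mem (show ω ∈ stopsAt v ξ _ from hleast)]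
    exact fun j _ hj => Set.indicator_of_notMem (fun hj' => hj (hj'.unique hleast)) _
  · exact (sum_eq_zero fun i _ =>
      Set.indicator_of_notMem (fun hi => h ⟨i, by simpa using hi.1⟩) _).symm

/-- An index `i` with `ω ∈ othersBelow v ξ i` and a positive excess is the only one reaching `ξ`,
so it is the accepted one. -/
lemma indicator_add_sum_indicator_posPart_le_thresholdReward [Fintype ι] [LinearOrder ι]
    (ω : Ω) :
    (allBelow v ξ)ᶜ.indicator (fun _ => ξ) ω
      + ∑ i, (othersBelow v ξ i).indicator (fun ω => (v i ω - ξ)⁺) ω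
      ≤ thresholdReward v ξ ω := by
  unfold thresholdReward
  split_ifs with h
  · set k := (univ.filter fun i => ξ ≤ v i ω).min' h
    have hk : ξ ≤ v k ω := (mem_filter.1 (min'_mem _ h)).2
    have hsum : ∑ i, (othersBelow v ξ i).indicator (fun ω => (v i ω - ξ)⁺) ω
        = (othersBelow v ξ k).indicator (fun ω => (v k ω - ξ)⁺) ω :=
      sum_eq_single_of_mem _ (mem_univ k) fun j _ hj =>
        Set.indicator_of_notMem (fun hω => (hω k (Ne.symm hj)).not_ge hk) _
    rw [hsum, Set.indicator_of_mem (fun hω => (hω k).not_ge hk)]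
    calc ξ + (othersBelow v ξ k).indicator (fun ω => (v k ω - ξ)⁺) ω
        ≤ ξ + (v k ω - ξ)⁺ := by
          gcongr
          exact Set.indicator_le_self' (fun _ _ => posPart_nonneg _) ω
      _ = v k ω := by rw [posPart_eq_self.2 (sub_nonneg.2 hk)]; ring
  · have hω : ω ∈ allBelow v ξ := fun i => not_le.1 fun hi => h ⟨i, by simpa using hi⟩
    rw [Set.indicator_of_notMem (Set.notMem_compl_iff.2 hω), zero_add]
    exact sum_nonpos fun i _ => Set.indicator_apply_nonpos fun _ =>
      (posPart_eq_zero.2 (sub_nonpos.2 (hω i).le)).le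

variable [MeasurableSpace Ω] {μ : Measure Ω}

lemma measurableSet_allBelow [Countable ι] (hmeas : ∀ i, Measurable (v i)) :
    MeasurableSet (allBelow v ξ) :=
  measurableSet_setOfPred.2 (by fun_prop)

lemma measurableSet_othersBelow [Countable ι] (hmeas : ∀ i, Measurable (v i)) (i : ι) :
    MeasurableSet (othersBelow v ξ i) :=
  measurableSet_setOfPred.2 (by fun_prop)

lemma measurableSet_stopsAt [Countable ι] [Preorder ι] (hmeas : ∀ i, Measurable (v i)) (i : ι) :
    MeasurableSet (stopsAt v ξ i) :=
  measurableSet_setOfPred.2 (by unfold IsLeast lowerBounds; fun_prop)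

lemma integrable_thresholdReward [Fintype ι] [LinearOrder ι] (hmeas : ∀ i, Measurable (v i))
    (hint : ∀ i, Integrable (v i) μ) : Integrable (thresholdReward v ξ) μ := by
  simp_rw [funext thresholdReward_eq_sum_indicator]
  exact integrable_finsetSum _ fun i _ => (hint i).indicator (measurableSet_stopsAt hmeas i)

lemma setIntegral_othersBelow [Fintype ι] (hindep : iIndepFun v μ)
    (hmeas : ∀ i, Measurable (v i)) (i : ι) {f : ℝ → ℝ} (hf : Measurable f) :
    ∫ ω in othersBelow v ξ i, f (v i ω) ∂μ = μ.real (othersBelow v ξ i) * ∫ ω, f (v i ω) ∂μ := by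
  classical
  have hpre : othersBelow v ξ i
      = (fun ω (j : ({i}ᶜ : Finset ι)) => v j ω) ⁻¹' {x | ∀ j, x j < ξ} := by
    ext ω; simp [othersBelow]
  rw [hpre]
  exact hindep.setIntegral_preimage_eq_mul hmeas i (measurableSet_setOfPred.2 (by fun_prop)) hf

theorem le_integral_thresholdReward [Fintype ι] [LinearOrder ι] [IsProbabilityMeasure μ]
    (hindep : iIndepFun v μ) (hmeas : ∀ i, Measurable (v i)) (hint : ∀ i, Integrable (v i) μ) :
    ξ * (1 - μ.real (allBelow v ξ)) + μ.real (allBelow v ξ) * ∑ i, ∫ ω, (v i ω - ξ)⁺ ∂μ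
      ≤ ∫ ω, thresholdReward v ξ ω ∂μ := by
  have hA := measurableSet_allBelow (ξ := ξ) hmeas
  have hG := measurableSet_othersBelow (ξ := ξ) hmeas
  have hpos (i : ι) : Integrable (fun ω => (v i ω - ξ)⁺) μ :=
    ((hint i).sub (integrable_const ξ)).pos_part
  have hlower : Integrable (fun ω => (allBelow v ξ)ᶜ.indicator (fun _ => ξ) ω
      + ∑ i, (othersBelow v ξ i).indicator (fun ω => (v i ω - ξ)⁺) ω) μ :=
    ((integrable_const ξ).indicator hA.compl).add
      (integrable_finsetSum _ fun i _ => (hpos i).indicator (hG i))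
  calc _ ≤ ξ * μ.real ((allBelow v ξ)ᶜ)
          + ∑ i, μ.real (othersBelow v ξ i) * ∫ ω, (v i ω - ξ)⁺ ∂μ := by
        rw [probReal_compl_eq_one_sub hA, mul_sum]
        gcongr with i
        · exact measure_ne_top μ _
        · exact allBelow_subset_othersBelow v ξ i
    _ = ∫ ω, ((allBelow v ξ)ᶜ.indicator (fun _ => ξ) ω
          + ∑ i, (othersBelow v ξ i).indicator (fun ω => (v i ω - ξ)⁺) ω) ∂μ := by
        rw [integral_add ((integrable_const ξ).indicator hA.compl)
            (integrable_finsetSum _ fun i _ => (hpos i).indicator (hG i)),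
          integral_indicator_const _ hA.compl,
          integral_finsetSum _ fun i _ => (hpos i).indicator (hG i)]
        simp_rw [integral_indicator (hG _),
          setIntegral_othersBelow hindep hmeas _ (f := fun x => (x - ξ)⁺) (by fun_prop)]
        rw [smul_eq_mul, mul_comm]
    _ ≤ _ := integral_mono hlower (integrable_thresholdReward hmeas hint)
        indicator_add_sum_indicator_posPart_le_thresholdReward

end Threshold

theorem stmt13_general {Ω : Type*} [MeasurableSpace Ω] (μ : Measure Ω) [IsProbabilityMeasure μ]
    (n : ℕ) (hne : (Finset.univ : Finset (Fin n)).Nonempty)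
    (v : Fin n → Ω → ℝ)
    (hmeas : ∀ i, Measurable (v i))
    (hint : ∀ i, Integrable (v i) μ)
    (hindep : ProbabilityTheory.iIndepFun v μ)
    (ξ : ℝ)
    (hξ : ξ = (1/2) * ∫ ω, Finset.univ.sup' hne (fun i => v i ω) ∂μ)
    (reward : Ω → ℝ)
    (hreward : ∀ ω, reward ω =
      if h : (Finset.univ.filter (fun i => ξ ≤ v i ω)).Nonempty
      then v ((Finset.univ.filter (fun i => ξ ≤ v i ω)).min' h) ω
      else 0) :
    (1/2) * ∫ ω, Finset.univ.sup' hne (fun i => v i ω) ∂μ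
      ≤ ∫ ω, reward ω ∂μ := by
  obtain rfl : reward = thresholdReward v ξ := funext hreward
  have hexcess := integral_sup'_sub_le_sum_integral_posPart hne (fun i _ => hint i) ξ
  rw [← hξ]
  calc ξ = ξ * (1 - μ.real (allBelow v ξ)) + μ.real (allBelow v ξ) * ξ := by ring
    _ ≤ ξ * (1 - μ.real (allBelow v ξ))
          + μ.real (allBelow v ξ) * ∑ i, ∫ ω, (v i ω - ξ)⁺ ∂μ := by
        gcongr
        linarith
    _ ≤ ∫ ω, thresholdReward v ξ ω ∂μ := le_integral_thresholdReward hindep hmeas hint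

/-- Fixed-threshold prophet inequality: with threshold `ξ = E[maxᵢ vᵢ]/2`, the stopping
rule accepting the first `i` with `vᵢ ≥ ξ` earns at least `E[maxᵢ vᵢ]/2` in expectation. -/
theorem stmt13 {Ω : Type*} [MeasurableSpace Ω] (μ : Measure Ω) [IsProbabilityMeasure μ]
    (n : ℕ) (hne : (Finset.univ : Finset (Fin n)).Nonempty)
    (v : Fin n → Ω → ℝ)
    (hmeas : ∀ i, Measurable (v i)) (hnn : ∀ i ω, 0 ≤ v i ω)
    (hint : ∀ i, Integrable (v i) μ)
    (hindep : ProbabilityTheory.iIndepFun v μ)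
    (ξ : ℝ)
    (hξ : ξ = (1/2) * ∫ ω, Finset.univ.sup' hne (fun i => v i ω) ∂μ)
    (reward : Ω → ℝ)
    (hreward : ∀ ω, reward ω =
      if h : (Finset.univ.filter (fun i => ξ ≤ v i ω)).Nonempty
      then v ((Finset.univ.filter (fun i => ξ ≤ v i ω)).min' h) ω
      else 0) :
    (1/2) * ∫ ω, Finset.univ.sup' hne (fun i => v i ω) ∂μ
      ≤ ∫ ω, reward ω ∂μ :=
  stmt13_general μ n hne v hmeas hint hindep ξ hξ reward hreward
end

section
/- Let $m \geq 3$ be an integer and $L = \lceil m - \log_2 m \rceil$. Define the sequence $q_0 = 1$, $q_1 = \frac{1}{m-1}$, and $q_k = \frac{m-k+2}{m-k} \cdot q_{k-1}$ for $2 \leq k \leq L$, and set $p_k = q_k / \sum_{j=0}^L q_j$. Then for every $0 \leq k \leq L-1$, $\sum_{j=0}^k p_j = p_{k+1} \cdot (m - k - 1)$, and consequently the quantities $Q_k := \sum_{j=0}^k p_j \cdot (m-k)$ are all equal to the constant $Q = m - L$. -/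
/-! Write `S k = ∑_{j ≤ k} q j`. The recursion for `q` is designed so that
`S k = q (k+1) (m - k - 1)`: adding `q (k+1)` gives `S (k+1) = q (k+1) (m - k)`, and the ratio
`q (k+2) / q (k+1) = (m - k) / (m - k - 2)` is exactly what makes `S (k+1) = q (k+2) (m - k - 2)`.
Then `S k (m - k)` and `S (k+1) (m - k - 1)` both equal `q (k+1) (m - k) (m - k - 1)`, so
`S k (m - k)` does not depend on `k`; normalising to `S L = 1` gives the value `m - L`. -/

open Finset

theorem sum_range_succ_mul_sub_eq_of_sum_eq_mul {R : Type*} [CommRing R] (a : ℕ → R) (c : R)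
    (L : ℕ) (h : ∀ k, k + 1 ≤ L → ∑ j ∈ range (k + 1), a j = a (k + 1) * (c - k - 1)) :
    ∀ k ≤ L, (∑ j ∈ range (k + 1), a j) * (c - k) = (∑ j ∈ range (L + 1), a j) * (c - L) := by
  intro k hk
  induction hk using Nat.decreasingInduction with
  | self => rfl
  | of_succ k hkL ih =>
    rw [← ih, sum_range_succ _ (k + 1), h k hkL]
    push_cast
    ring

section Recursion

variable {c : ℝ} {L : ℕ} {q : ℕ → ℝ}

theorem pos_of_recursion (hc : (L : ℝ) < c) (hq0 : q 0 = 1) (hq1 : q 1 = 1 / (c - 1))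
    (hqk : ∀ k, 2 ≤ k → k ≤ L → q k = ((c - k + 2) / (c - k)) * q (k - 1)) :
    ∀ k ≤ L, 0 < q k
  | 0, _ => by simp [hq0]
  | 1, h1 => by
    have : (1 : ℝ) < c := lt_of_le_of_lt (by exact_mod_cast h1) hc
    rw [hq1]
    exact one_div_pos.mpr (sub_pos.mpr this)
  | k + 2, hk => by
    have hkc : ((k + 2 : ℕ) : ℝ) < c := lt_of_le_of_lt (by exact_mod_cast hk) hc
    have hprev := pos_of_recursion hc hq0 hq1 hqk (k + 1) (by omega)
    rw [hqk (k + 2) (by omega) hk, show k + 2 - 1 = k + 1 from rfl]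
    push_cast at hkc ⊢
    have hnum : 0 < c - (k + 2) + 2 := by linarith
    have hden : 0 < c - (k + 2) := by linarith
    positivity

theorem sum_range_eq_mul_of_recursion (hc : (L : ℝ) < c) (hq0 : q 0 = 1)
    (hq1 : q 1 = 1 / (c - 1))
    (hqk : ∀ k, 2 ≤ k → k ≤ L → q k = ((c - k + 2) / (c - k)) * q (k - 1)) :
    ∀ k, k + 1 ≤ L → ∑ j ∈ range (k + 1), q j = q (k + 1) * (c - k - 1)
  | 0, h1 => by
    have : c - 1 ≠ 0 := (sub_pos.mpr (lt_of_le_of_lt (by exact_mod_cast h1) hc)).ne'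
    simp [hq0, hq1, this]
  | k + 1, hk => by
    have hkc : ((k + 2 : ℕ) : ℝ) < c := lt_of_le_of_lt (by exact_mod_cast hk) hc
    rw [sum_range_succ, sum_range_eq_mul_of_recursion hc hq0 hq1 hqk k (by omega),
      hqk (k + 2) (by omega) hk, show k + 2 - 1 = k + 1 from rfl]
    push_cast at hkc ⊢
    have hden : c - (k + 2) ≠ 0 := (sub_pos.mpr hkc).ne'
    field_simp
    ring

end Recursion

theorem natCast_lt_of_intCast_eq_ceil_sub_logb {m L : ℕ} (hm : 2 ≤ m)
    (hL : (L : ℤ) = ⌈(m : ℝ) - Real.logb 2 m⌉) : (L : ℝ) < m := by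
  have hlog : 1 ≤ Real.logb 2 m := by
    rw [Real.le_logb_iff_rpow_le one_lt_two (by positivity), Real.rpow_one]
    exact_mod_cast hm
  have : (L : ℤ) ≤ m - 1 := by
    rw [hL, Int.ceil_le]
    push_cast
    linarith
  exact_mod_cast (show L < m by omega)

/-- The combinatorial property of the lower-bound example: the recursively defined
distribution `p` satisfies `∑_{j≤k} pⱼ = p_{k+1}(m-k-1)`, and hence all quantities
`Q_k = (∑_{j≤k} pⱼ)(m-k)` equal the constant `m - L`. -/
theorem stmt17 (m L : ℕ) (hm : 3 ≤ m)
    (hL : (L : ℤ) = ⌈(m : ℝ) - Real.logb 2 m⌉)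
    (q p : ℕ → ℝ)
    (hq0 : q 0 = 1) (hq1 : q 1 = 1 / ((m : ℝ) - 1))
    (hqk : ∀ k, 2 ≤ k → k ≤ L →
      q k = (((m : ℝ) - k + 2) / ((m : ℝ) - k)) * q (k - 1))
    (hp : ∀ k, p k = q k / ∑ j ∈ Finset.range (L + 1), q j) :
    (∀ k, k + 1 ≤ L →
      ∑ j ∈ Finset.range (k + 1), p j = p (k + 1) * ((m : ℝ) - k - 1))
    ∧ (∀ k ≤ L,
      (∑ j ∈ Finset.range (k + 1), p j) * ((m : ℝ) - k) = (m : ℝ) - L) := by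
  have hLm : (L : ℝ) < m := natCast_lt_of_intCast_eq_ceil_sub_logb (by omega) hL
  have hsum_p : ∀ k, ∑ j ∈ range (k + 1), p j = (∑ j ∈ range (k + 1), q j) /
      ∑ j ∈ range (L + 1), q j := fun k => by
    simp only [hp, sum_div]
  have htotal : ∑ j ∈ range (L + 1), q j ≠ 0 :=
    (sum_pos (fun j hj => pos_of_recursion hLm hq0 hq1 hqk j (Nat.lt_succ_iff.mp (mem_range.mp hj)))
      nonempty_range_add_one).ne'
  have hpartial : ∀ k, k + 1 ≤ L →
      ∑ j ∈ range (k + 1), p j = p (k + 1) * ((m : ℝ) - k - 1) := fun k hk => by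
    rw [hsum_p, sum_range_eq_mul_of_recursion hLm hq0 hq1 hqk k hk, hp]
    ring
  refine ⟨hpartial, fun k hk => ?_⟩
  rw [sum_range_succ_mul_sub_eq_of_sum_eq_mul p m L hpartial k hk, hsum_p, div_self htotal,
    one_mul]
end

section
/- Let $\theta_i : \mathbb{R}^n \to \mathbb{R}$, $i \in [n]$, be bi-monotonic posted price functions: $\theta_i(s)$ is non-decreasing in $s_i$ and non-increasing in $s_j$ for every $j \neq i$. Fix a buyer type $b \in \mathbb{R}^n$, and define the buyer's choice $i^*(s) \in \argmax_{i : b_i \geq \theta_i(s)} (b_i - \theta_i(s))$ (with a consistent tie-breaking rule, and no purchase if the argmax set is empty). Then for every $i$, the allocation indicator $\hat{x}_i(s) = \mathbb{1}[i^*(s) = i]$ is non-increasing in $s_i$: if $i^*(s_i, s_{-i}) = i$ and $s_i' \leq s_i$, then $i^*(s_i', s_{-i}) = i$. -/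
/-! Lowering `s i` weakly raises the buyer's utility `b i - θ i` for item `i` and weakly lowers it
for every other item (bi-monotonicity), and the lexicographic (utility, then index) preference of
`i` over any `j` survives such a change. -/

lemma lt_or_eq_and_le_of_le_of_le {α ι : Type*} [LinearOrder α] [LE ι] {u u' v v' : α}
    {i j : ι} (h : v < u ∨ (v = u ∧ i ≤ j)) (hu : u ≤ u') (hv : v' ≤ v) :
    v' < u' ∨ (v' = u' ∧ i ≤ j) := by
  rcases h with hlt | ⟨rfl, hij⟩
  · exact Or.inl (hv.trans_lt (hlt.trans_le hu))
  · rcases hv.lt_or_eq with hv' | rfl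
    · exact Or.inl (hv'.trans_le hu)
    · rcases hu.lt_or_eq with hu' | rfl
      · exact Or.inl hu'
      · exact Or.inr ⟨rfl, hij⟩

/-- Bi-monotonic posted prices induce a monotone allocation: if the buyer's
(min-index tie-breaking) utility-maximizing affordable choice at cost profile `s`
is item `i`, then it remains `i` when seller `i` lowers her reported cost. -/
theorem stmt19 (n : ℕ) (θ : Fin n → (Fin n → ℝ) → ℝ) (b : Fin n → ℝ)
    (hmono : ∀ (i : Fin n) (s : Fin n → ℝ) (c : ℝ), c ≤ s i →
      θ i (Function.update s i c) ≤ θ i s)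
    (hanti : ∀ (i j : Fin n) (s : Fin n → ℝ) (c : ℝ), j ≠ i → c ≤ s j →
      θ i s ≤ θ i (Function.update s j c))
    (istar : (Fin n → ℝ) → Option (Fin n))
    (histar : ∀ (s : Fin n → ℝ) (i : Fin n), istar s = some i ↔
      (θ i s ≤ b i ∧ ∀ j, θ j s ≤ b j →
        (b j - θ j s < b i - θ i s ∨ (b j - θ j s = b i - θ i s ∧ i ≤ j)))) :
    ∀ (s : Fin n → ℝ) (i : Fin n) (c : ℝ), istar s = some i → c ≤ s i →
      istar (Function.update s i c) = some i := by
  intro s i c hs hc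
  rw [histar] at hs ⊢
  obtain ⟨haff, hbest⟩ := hs
  have hθi : θ i (Function.update s i c) ≤ θ i s := hmono i s c hc
  refine ⟨hθi.trans haff, fun j hj => ?_⟩
  rcases eq_or_ne j i with rfl | hji
  · exact Or.inr ⟨rfl, le_rfl⟩
  have hθj : θ j s ≤ θ j (Function.update s i c) := hanti j i s c hji.symm hc
  exact lt_or_eq_and_le_of_le_of_le (hbest j (hθj.trans hj))
    (by linarith) (by linarith)
end
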